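/- arXiv:2206.05118 — 5 statements merged into one kernel-verified Lean document; each statement's English description precedes it below -/
import Mathlib

section
/- Let f be a set of natural numbers, d a real constant with d ≠ 0, and suppose there is a constant C₀ > 0 such that |π_f(x) − d·x/ln x| ≤ C₀·x/ln²x for all x ≥ 2. Let g : ℝ → ℝ be monotone with a continuous derivative on [2, ∞). Then there is a constant C > 0 such that for all x ≥ 2: |∑_{p prime, p ≤ x, p ∈ f} g(p) − d·x·g(x)/ln x + d·∫_2^x t·g'(t)/ln t dt| ≤ C·( x·|g(x)|/ln²x + ∫_2^x t·|g'(t)|/ln²t dt ). -/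
/-!
Abel summation with the weights `c k = 1` for primes `k ∈ f` and `0` otherwise, whose partial
sums are `π_f`, gives `∑ g(p) = g(x) π_f(x) - ∫₂ˣ g'(t) π_f(t) dt`. Subtracting the same identity
for the main term `d t / log t` leaves `g(x) E(x) - ∫₂ˣ g'(t) E(t) dt` with `E = π_f - d t / log t`,
and the hypothesis `|E(t)| ≤ C₀ t / log² t` bounds both pieces.
-/

open Filter

/-- `primeCountIn f t` is the number of primes `p ≤ t` with `p ∈ f`. -/
noncomputable def primeCountIn (f : Set ℕ) (t : ℝ) : ℕ :=
  {p : ℕ | p.Prime ∧ p ∈ f ∧ (p : ℝ) ≤ t}.ncard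

open scoped Classical in
/-- `primeSumIn f g x` is the sum of `g p` over primes `p ≤ x` with `p ∈ f`. -/
noncomputable def primeSumIn (f : Set ℕ) (g : ℝ → ℝ) (x : ℝ) : ℝ :=
  ∑ p ∈ (Finset.range (⌊x⌋₊ + 1)).filter (fun p => p.Prime ∧ p ∈ f), g p

open Finset MeasureTheory intervalIntegral

section AbelSummation

variable {c : ℕ → ℝ} {g g' : ℝ → ℝ} {x : ℝ}

theorem sum_mul_eq_sub_intervalIntegral_mul (hc0 : c 0 = 0) (hc1 : c 1 = 0) (hx : 2 ≤ x)
    (hderiv : ∀ t ∈ Set.Icc 2 x, HasDerivAt g (g' t) t) (hcont : ContinuousOn g' (Set.Icc 2 x)) :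
    ∑ k ∈ Icc 0 ⌊x⌋₊, g k * c k =
      g x * ∑ k ∈ Icc 0 ⌊x⌋₊, c k - ∫ t in 2..x, g' t * ∑ k ∈ Icc 0 ⌊t⌋₊, c k := by
  have hderiv_eq : Set.EqOn (deriv g) g' (Set.Icc 2 x) := fun t ht => (hderiv t ht).deriv
  rw [sum_mul_eq_sub_integral_mul₁ c hc0 hc1 x (fun t ht => (hderiv t ht).differentiableAt)
    (hcont.integrableOn_Icc.congr_fun hderiv_eq.symm measurableSet_Icc), integral_of_le hx]
  congr 1
  exact setIntegral_congr_fun measurableSet_Ioc fun t ht =>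
    by rw [hderiv_eq (Set.Ioc_subset_Icc_self ht)]

theorem abs_sum_mul_sub_le (hc0 : c 0 = 0) (hc1 : c 1 = 0) (hx : 2 ≤ x)
    (hderiv : ∀ t ∈ Set.Icc 2 x, HasDerivAt g (g' t) t) (hcont : ContinuousOn g' (Set.Icc 2 x))
    {M B : ℝ → ℝ} (hM : ContinuousOn M (Set.Icc 2 x)) (hB : ContinuousOn B (Set.Icc 2 x))
    (happrox : ∀ t ∈ Set.Icc 2 x, |∑ k ∈ Icc 0 ⌊t⌋₊, c k - M t| ≤ B t) :
    |∑ k ∈ Icc 0 ⌊x⌋₊, g k * c k - g x * M x + ∫ t in 2..x, g' t * M t| ≤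
      |g x| * B x + ∫ t in 2..x, |g' t| * B t := by
  set S : ℝ → ℝ := fun t => ∑ k ∈ Icc 0 ⌊t⌋₊, c k
  have hS_int : IntervalIntegrable (fun t => g' t * S t) volume 2 x :=
    (intervalIntegrable_iff_integrableOn_Icc_of_le hx).2
      (integrableOn_mul_sum_Icc c zero_le_two hcont.integrableOn_Icc)
  have hM_int : IntervalIntegrable (fun t => g' t * M t) volume 2 x :=
    (hcont.mul hM).intervalIntegrable_of_Icc hx
  have hsplit : ∑ k ∈ Icc 0 ⌊x⌋₊, g k * c k - g x * M x + ∫ t in 2..x, g' t * M t =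
      g x * (S x - M x) - ∫ t in 2..x, g' t * (S t - M t) := by
    simp only [mul_sub]
    rw [sum_mul_eq_sub_intervalIntegral_mul hc0 hc1 hx hderiv hcont,
      integral_sub hS_int hM_int]
    ring
  have hboundary : |g x * (S x - M x)| ≤ |g x| * B x := by
    rw [abs_mul]
    exact mul_le_mul_of_nonneg_left (happrox x ⟨hx, le_rfl⟩) (abs_nonneg _)
  have hintegral : |∫ t in 2..x, g' t * (S t - M t)| ≤ ∫ t in 2..x, |g' t| * B t := by
    rw [← Real.norm_eq_abs]
    refine norm_integral_le_of_norm_le hx (ae_of_all _ fun t ht => ?_)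
      ((hcont.abs.mul hB).intervalIntegrable_of_Icc hx)
    rw [Real.norm_eq_abs, abs_mul]
    exact mul_le_mul_of_nonneg_left (happrox t (Set.Ioc_subset_Icc_self ht)) (abs_nonneg _)
  rw [hsplit]
  exact (abs_sub _ _).trans (add_le_add hboundary hintegral)

end AbelSummation

open scoped Classical in
noncomputable def primeIndicator (f : Set ℕ) (k : ℕ) : ℝ :=
  if k.Prime ∧ k ∈ f then 1 else 0

theorem primeCountIn_eq_sum_primeIndicator (f : Set ℕ) {t : ℝ} (ht : 0 ≤ t) :
    (primeCountIn f t : ℝ) = ∑ k ∈ Icc 0 ⌊t⌋₊, primeIndicator f k := by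
  classical
  have hset : {p : ℕ | p.Prime ∧ p ∈ f ∧ (p : ℝ) ≤ t} =
      ↑((range (⌊t⌋₊ + 1)).filter fun p => p.Prime ∧ p ∈ f) := by
    ext p
    simp only [Set.mem_ofPred_eq, coe_filter, mem_range, Nat.lt_succ_iff, Nat.le_floor_iff ht]
    tauto
  rw [primeCountIn, hset, Set.ncard_coe_finset, ← Nat.Ico_zero_eq_range, Ico_add_one_right_eq_Icc]
  simp [primeIndicator, sum_boole]

theorem primeSumIn_eq_sum_mul_primeIndicator (f : Set ℕ) (g : ℝ → ℝ) (x : ℝ) :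
    primeSumIn f g x = ∑ k ∈ Icc 0 ⌊x⌋₊, g k * primeIndicator f k := by
  classical
  rw [primeSumIn, sum_filter, ← Nat.Ico_zero_eq_range, Ico_add_one_right_eq_Icc]
  refine sum_congr rfl fun k _ => ?_
  simp only [primeIndicator, mul_ite, mul_one, mul_zero]

theorem continuousOn_mul_div_log_pow (a : ℝ) (n : ℕ) :
    ContinuousOn (fun t => a * t / Real.log t ^ n) (Set.Ici 2) :=
  (continuousOn_const.mul continuousOn_id).div
    ((Real.continuousOn_log.mono fun t ht => by
      simp only [Set.mem_compl_iff, Set.mem_singleton_iff]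
      exact (zero_lt_two.trans_le ht).ne').pow n)
    fun t ht => pow_ne_zero n (Real.log_pos (one_lt_two.trans_le ht)).ne'

theorem stmt4_general (f : Set ℕ) (d : ℝ) (C₀ : ℝ) (hC₀ : 0 < C₀)
    (hpi : ∀ x : ℝ, 2 ≤ x →
      |(primeCountIn f x : ℝ) - d * x / Real.log x| ≤ C₀ * x / (Real.log x) ^ 2)
    (g g' : ℝ → ℝ)
    (hderiv : ∀ t ∈ Set.Ici (2 : ℝ), HasDerivAt g (g' t) t)
    (hcont : ContinuousOn g' (Set.Ici (2 : ℝ))) :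
    ∃ C : ℝ, 0 < C ∧ ∀ x : ℝ, 2 ≤ x →
      |primeSumIn f g x - d * x * g x / Real.log x +
          d * ∫ t in (2 : ℝ)..x, t * g' t / Real.log t| ≤
        C * (x * |g x| / (Real.log x) ^ 2 +
          ∫ t in (2 : ℝ)..x, t * |g' t| / (Real.log t) ^ 2) := by
  refine ⟨C₀, hC₀, fun x hx => ?_⟩
  have hIcc : Set.Icc 2 x ⊆ Set.Ici 2 := Set.Icc_subset_Ici_self
  have key := abs_sum_mul_sub_le (c := primeIndicator f)
    (by simp [primeIndicator, Nat.not_prime_zero]) (by simp [primeIndicator, Nat.not_prime_one])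
    hx (fun t ht => hderiv t (hIcc ht)) (hcont.mono hIcc) ((continuousOn_mul_div_log_pow d 1).mono hIcc)
    ((continuousOn_mul_div_log_pow C₀ 2).mono hIcc) fun t ht => by
      rw [← primeCountIn_eq_sum_primeIndicator f (by linarith [ht.1]), pow_one]
      exact hpi t ht.1
  have hmain : d * ∫ t in (2 : ℝ)..x, t * g' t / Real.log t =
      ∫ t in (2 : ℝ)..x, g' t * (d * t / Real.log t ^ 1) := by
    rw [← intervalIntegral.integral_const_mul]
    exact integral_congr fun t _ => by ring
  have herror : C₀ * (x * |g x| / Real.log x ^ 2 +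
      ∫ t in (2 : ℝ)..x, t * |g' t| / Real.log t ^ 2) =
      |g x| * (C₀ * x / Real.log x ^ 2) + ∫ t in (2 : ℝ)..x, |g' t| * (C₀ * t / Real.log t ^ 2) := by
    rw [mul_add, ← intervalIntegral.integral_const_mul]
    exact congr_arg₂ _ (by ring) (integral_congr fun t _ => by ring)
  rw [hmain, herror, primeSumIn_eq_sum_mul_primeIndicator]
  convert key using 3
  ring

theorem stmt4 (f : Set ℕ) (d : ℝ) (hd : d ≠ 0) (C₀ : ℝ) (hC₀ : 0 < C₀)
    (hpi : ∀ x : ℝ, 2 ≤ x →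
      |(primeCountIn f x : ℝ) - d * x / Real.log x| ≤ C₀ * x / (Real.log x) ^ 2)
    (g g' : ℝ → ℝ)
    (hmono : MonotoneOn g (Set.Ici (2 : ℝ)) ∨ AntitoneOn g (Set.Ici (2 : ℝ)))
    (hderiv : ∀ t ∈ Set.Ici (2 : ℝ), HasDerivAt g (g' t) t)
    (hcont : ContinuousOn g' (Set.Ici (2 : ℝ))) :
    ∃ C : ℝ, 0 < C ∧ ∀ x : ℝ, 2 ≤ x →
      |primeSumIn f g x - d * x * g x / Real.log x +
          d * ∫ t in (2 : ℝ)..x, t * g' t / Real.log t| ≤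
        C * (x * |g x| / (Real.log x) ^ 2 +
          ∫ t in (2 : ℝ)..x, t * |g' t| / (Real.log t) ^ 2) :=
  stmt4_general f d C₀ hC₀ hpi g g' hderiv hcont
end

section
/- Let f be a set of natural numbers and d > 0 a real constant, and suppose there is a constant C₀ > 0 such that |π_f(x) − d·x/ln x| ≤ C₀·x/ln²x for all x ≥ 2. Then there is a constant C > 0 such that for all x ≥ 2: |∑_{p prime, p ≤ x, p ∈ f} ln p − d·x| ≤ C·x/ln x. -/
open Filter

/-! Summation by parts writes `∑_{p ≤ x} log p` as
`π_f(x) log x - ∑_{n < x} π_f(n) (log (n + 1) - log n)`, up to an error of at most `1` from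
replacing `log ⌊x⌋` by `log x`. The hypothesis, multiplied by `log x`, says that the first term is
`d x + O(x / log x)`. It also gives `π_f(n) ≤ B n / log n` with `B = d + C₀ / log 2`, so the
`n`-th summand is at most `B / log n`, and `∑_{2 ≤ n ≤ x} 1 / log n = O(x / log x)` (split the
sum at `√x`). -/

open Finset Real

lemma abs_mul_sub_le_of_abs_sub_div_le {a b c L : ℝ} (hL : 0 < L)
    (h : |a - b / L| ≤ c / L ^ 2) : |a * L - b| ≤ c / L := by
  have hfactor : a * L - b = (a - b / L) * L := by field_simp
  rw [hfactor, abs_mul, abs_of_pos hL]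
  calc |a - b / L| * L ≤ c / L ^ 2 * L := by gcongr
    _ = c / L := by field_simp

lemma log_sub_log_le_div_sub_one {a b : ℝ} (ha : 0 < a) (hb : 0 < b) :
    log a - log b ≤ a / b - 1 := by
  rw [← log_div ha.ne' hb.ne']
  exact log_le_sub_one_of_pos (div_pos ha hb)

lemma log_add_one_sub_log_le {y : ℝ} (hy : 0 < y) : log (y + 1) - log y ≤ y⁻¹ := by
  have h := log_sub_log_le_div_sub_one (by linarith : 0 < y + 1) hy
  rwa [add_div, div_self hy.ne', one_div, add_sub_cancel_left] at h

lemma one_le_div_log {x : ℝ} (hx : 1 < x) : 1 ≤ x / log x := by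
  rw [one_le_div (log_pos hx)]
  linarith [log_le_sub_one_of_pos (by linarith : 0 < x)]

lemma sqrt_le_two_mul_div_log {x : ℝ} (hx : 1 < x) : √x ≤ 2 * x / log x := by
  have hlog : log x ≤ 2 * √x := by
    have := log_le_rpow_div (by linarith : 0 ≤ x) (by norm_num : (0 : ℝ) < 1 / 2)
    rwa [← sqrt_eq_rpow, div_div_eq_mul_div, div_one, mul_comm] at this
  rw [le_div_iff₀ (log_pos hx)]
  nlinarith [sqrt_nonneg x, mul_self_sqrt (by linarith : 0 ≤ x)]

lemma sum_Icc_inv_log_le {x : ℝ} (hx : 2 ≤ x) {N : ℕ} (hN : (N : ℝ) ≤ x) :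
    ∑ n ∈ Icc 2 N, (log n)⁻¹ ≤ (2 / log 2 + 2) * (x / log x) := by
  have hlx : 0 < log x := log_pos (by linarith)
  have hl2 : 0 < log 2 := log_pos one_lt_two
  have hsmall : ∑ n ∈ Icc 2 N with ((n : ℕ) : ℝ) ≤ √x, (log n)⁻¹ ≤ √x * (log 2)⁻¹ := by
    have hcard : (#{n ∈ Icc 2 N | ((n : ℕ) : ℝ) ≤ √x} : ℝ) ≤ √x := by
      have hsub : {n ∈ Icc 2 N | ((n : ℕ) : ℝ) ≤ √x} ⊆ Icc 1 ⌊√x⌋₊ := by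
        intro n hn
        simp only [mem_filter, mem_Icc] at hn ⊢
        exact ⟨by omega, Nat.le_floor hn.2⟩
      calc (#{n ∈ Icc 2 N | ((n : ℕ) : ℝ) ≤ √x} : ℝ) ≤ ⌊√x⌋₊ := by
            exact_mod_cast (card_le_card hsub).trans (by simp)
        _ ≤ √x := Nat.floor_le (sqrt_nonneg x)
    refine (sum_le_card_nsmul _ _ (log 2)⁻¹ fun n hn => ?_).trans ?_
    · have hn2 : (2 : ℝ) ≤ n := by exact_mod_cast (mem_Icc.1 (mem_filter.1 hn).1).1
      exact inv_anti₀ hl2 (log_le_log two_pos hn2)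
    · rw [nsmul_eq_mul]
      exact mul_le_mul_of_nonneg_right hcard (inv_nonneg.2 hl2.le)
  have hlarge : ∑ n ∈ Icc 2 N with ¬((n : ℕ) : ℝ) ≤ √x, (log n)⁻¹ ≤ x * (2 / log x) := by
    refine (sum_le_card_nsmul _ _ (2 / log x) fun n hn => ?_).trans ?_
    · have hn : √x < n := not_le.1 (mem_filter.1 hn).2
      have hlog : log x / 2 < log n := by
        rw [← log_sqrt (by linarith)]
        exact log_lt_log (sqrt_pos.2 (by linarith)) hn
      rw [inv_le_comm₀ (by linarith) (by positivity), inv_div]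
      linarith
    · have hcard : (#{n ∈ Icc 2 N | ¬((n : ℕ) : ℝ) ≤ √x} : ℝ) ≤ x := by
        calc (#{n ∈ Icc 2 N | ¬((n : ℕ) : ℝ) ≤ √x} : ℝ) ≤ N := by
              exact_mod_cast (card_filter_le _ _).trans (by simp)
          _ ≤ x := hN
      rw [nsmul_eq_mul]
      exact mul_le_mul_of_nonneg_right hcard (by positivity)
  rw [← sum_filter_add_sum_filter_not _ (fun n : ℕ => ((n : ℕ) : ℝ) ≤ √x)]
  have hsqrt := sqrt_le_two_mul_div_log (by linarith : 1 < x)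
  calc _ ≤ √x * (log 2)⁻¹ + x * (2 / log x) := add_le_add hsmall hlarge
    _ ≤ 2 * x / log x * (log 2)⁻¹ + x * (2 / log x) := by gcongr
    _ = (2 / log 2 + 2) * (x / log x) := by ring

section PrimeCount

variable (f : Set ℕ)

open scoped Classical in
lemma primeCountIn_natCast (n : ℕ) :
    primeCountIn f n = #{p ∈ range (n + 1) | p.Prime ∧ p ∈ f} := by
  rw [primeCountIn, ← Set.ncard_coe_finset]
  congr 1
  ext p
  simp only [coe_filter, mem_range, Set.mem_ofPred_eq, Nat.lt_succ_iff, Nat.cast_le]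
  tauto

lemma primeCountIn_floor {x : ℝ} (hx : 0 ≤ x) : primeCountIn f ⌊x⌋₊ = primeCountIn f x := by
  simp only [primeCountIn, ← Nat.le_floor_iff hx, Nat.cast_le]

lemma primeCountIn_eq_zero {t : ℝ} (ht : t < 2) : primeCountIn f t = 0 := by
  have hempty : {p : ℕ | p.Prime ∧ p ∈ f ∧ (p : ℝ) ≤ t} = ∅ :=
    Set.eq_empty_of_forall_notMem fun p hp =>
      (ht.trans_le (by exact_mod_cast hp.1.two_le)).not_ge hp.2.2
  rw [primeCountIn, hempty, Set.ncard_empty]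

lemma primeCountIn_natCast_le (n : ℕ) : primeCountIn f n ≤ n := by
  classical
  rw [primeCountIn_natCast]
  calc #{p ∈ range (n + 1) | p.Prime ∧ p ∈ f} ≤ #(Icc 1 n) := by
        refine card_le_card fun p hp => ?_
        simp only [mem_filter, mem_range, mem_Icc] at hp ⊢
        exact ⟨hp.2.1.one_le, by omega⟩
    _ = n := by simp

lemma primeSumIn_floor (g : ℝ → ℝ) (x : ℝ) : primeSumIn f g ⌊x⌋₊ = primeSumIn f g x := by
  simp only [primeSumIn, Nat.floor_natCast]

lemma primeSumIn_natCast_by_parts (g : ℝ → ℝ) (N : ℕ) :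
    primeSumIn f g N = primeCountIn f N * g N
      - ∑ n ∈ range N, primeCountIn f n * (g (n + 1) - g n) := by
  classical
  have hcount : ∀ n : ℕ,
      ∑ p ∈ range (n + 1), (if p.Prime ∧ p ∈ f then (1 : ℝ) else 0) = primeCountIn f n := by
    intro n
    rw [sum_boole, primeCountIn_natCast]
  have := sum_range_by_parts (fun p : ℕ => g p)
    (fun p : ℕ => if p.Prime ∧ p ∈ f then (1 : ℝ) else 0) (N + 1)
  simp only [smul_eq_mul, mul_ite, mul_one, mul_zero, hcount, add_tsub_cancel_right] at this
  rw [primeSumIn, Nat.floor_natCast, sum_filter, this]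
  push_cast
  congr 1
  · ring
  · exact sum_congr rfl fun n _ => by ring

lemma primeSumIn_log_eq {x : ℝ} (hx : 0 ≤ x) :
    primeSumIn f log x = primeCountIn f x * log x
      - (primeCountIn f x * (log x - log ⌊x⌋₊)
        + ∑ n ∈ range ⌊x⌋₊, primeCountIn f n * (log (n + 1) - log n)) := by
  rw [← primeSumIn_floor, primeSumIn_natCast_by_parts, primeCountIn_floor f hx]
  ring

lemma primeCountIn_mul_log_sub_log_floor_nonneg {x : ℝ} (hx : 1 ≤ x) :
    0 ≤ (primeCountIn f x : ℝ) * (log x - log ⌊x⌋₊) :=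
  mul_nonneg (Nat.cast_nonneg _) (sub_nonneg.2
    (log_le_log (by exact_mod_cast Nat.floor_pos.2 hx) (Nat.floor_le (by linarith))))

lemma primeCountIn_mul_log_sub_log_floor_le {x : ℝ} (hx : 1 ≤ x) :
    (primeCountIn f x : ℝ) * (log x - log ⌊x⌋₊) ≤ 1 := by
  have hN : (0 : ℝ) < ⌊x⌋₊ := by exact_mod_cast Nat.floor_pos.2 hx
  have hcount : (primeCountIn f x : ℝ) ≤ ⌊x⌋₊ := by
    rw [← primeCountIn_floor f (by linarith)]
    exact_mod_cast primeCountIn_natCast_le f _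
  have hlog := log_sub_log_le_div_sub_one (by linarith) hN
  have hlog0 : 0 ≤ log x - log ⌊x⌋₊ := sub_nonneg.2 (log_le_log hN (Nat.floor_le (by linarith)))
  calc (primeCountIn f x : ℝ) * (log x - log ⌊x⌋₊) ≤ ⌊x⌋₊ * (x / ⌊x⌋₊ - 1) :=
        mul_le_mul hcount hlog hlog0 hN.le
    _ = x - ⌊x⌋₊ := by field_simp
    _ ≤ 1 := by linarith [Nat.lt_floor_add_one x]

lemma sum_primeCountIn_mul_log_succ_sub_log_nonneg (N : ℕ) :
    0 ≤ ∑ n ∈ range N, (primeCountIn f n : ℝ) * (log (n + 1) - log n) := by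
  refine sum_nonneg fun n _ => mul_nonneg (Nat.cast_nonneg _) (sub_nonneg.2 ?_)
  rcases n.eq_zero_or_pos with rfl | hn
  · simp
  · exact log_le_log (by exact_mod_cast hn) (by linarith)

end PrimeCount

section Chebyshev

variable {f : Set ℕ}

lemma primeCountIn_le_of_abs_sub_le {d C₀ : ℝ} (hC₀ : 0 ≤ C₀)
    (hpi : ∀ x : ℝ, 2 ≤ x →
      |(primeCountIn f x : ℝ) - d * x / log x| ≤ C₀ * x / (log x) ^ 2)
    {t : ℝ} (ht : 2 ≤ t) : (primeCountIn f t : ℝ) ≤ (d + C₀ / log 2) * t / log t := by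
  have hl2 : 0 < log 2 := log_pos one_lt_two
  have hl2t : log 2 ≤ log t := log_le_log two_pos ht
  have hupper := (abs_le.1 (hpi t ht)).2
  have hsq : C₀ * t / (log t) ^ 2 ≤ C₀ * t / (log 2 * log t) := by
    rw [sq]
    exact div_le_div_of_nonneg_left (mul_nonneg hC₀ (by linarith))
      (mul_pos hl2 (hl2.trans_le hl2t)) (mul_le_mul_of_nonneg_right hl2t (hl2.le.trans hl2t))
  have hsplit : (d + C₀ / log 2) * t / log t = d * t / log t + C₀ * t / (log 2 * log t) := by
    field_simp
  linarith

lemma primeCountIn_mul_log_succ_sub_log_le {B : ℝ}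
    (hπ : ∀ t : ℝ, 2 ≤ t → (primeCountIn f t : ℝ) ≤ B * t / log t) {n : ℕ} (hn : 2 ≤ n) :
    (primeCountIn f n : ℝ) * (log (n + 1) - log n) ≤ B * (log n)⁻¹ := by
  have hn2 : (2 : ℝ) ≤ n := by exact_mod_cast hn
  have hcount := hπ n hn2
  calc (primeCountIn f n : ℝ) * (log (n + 1) - log n) ≤ B * n / log n * (n : ℝ)⁻¹ :=
        mul_le_mul hcount (log_add_one_sub_log_le (by linarith))
          (sub_nonneg.2 (log_le_log (by linarith) (by linarith)))
          ((Nat.cast_nonneg _).trans hcount)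
    _ = B * (log n)⁻¹ := by field_simp

lemma sum_primeCountIn_mul_log_succ_sub_log_le {B : ℝ} (hB : 0 ≤ B)
    (hπ : ∀ t : ℝ, 2 ≤ t → (primeCountIn f t : ℝ) ≤ B * t / log t)
    {x : ℝ} (hx : 2 ≤ x) {N : ℕ} (hN : (N : ℝ) ≤ x) :
    ∑ n ∈ range N, (primeCountIn f n : ℝ) * (log (n + 1) - log n)
      ≤ B * (2 / log 2 + 2) * (x / log x) := by
  have hsmall : ∀ n ∈ range N,
      (primeCountIn f n : ℝ) * (log (n + 1) - log n) ≠ 0 → 2 ≤ n := by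
    intro n _ hne
    by_contra hn
    rw [primeCountIn_eq_zero f (by exact_mod_cast not_le.1 hn)] at hne
    simp at hne
  have hinv_nonneg : ∀ n ∈ Icc 2 N, 0 ≤ B * (log n)⁻¹ := fun n hn =>
    mul_nonneg hB (inv_nonneg.2 (log_nonneg (by exact_mod_cast one_le_two.trans (mem_Icc.1 hn).1)))
  rw [← sum_filter_of_ne hsmall]
  calc _ ≤ ∑ n ∈ range N with 2 ≤ n, B * (log n)⁻¹ :=
        sum_le_sum fun n hn => primeCountIn_mul_log_succ_sub_log_le hπ (mem_filter.1 hn).2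
    _ ≤ ∑ n ∈ Icc 2 N, B * (log n)⁻¹ := by
        refine sum_le_sum_of_subset_of_nonneg (fun n hn => ?_) fun n hn _ => hinv_nonneg n hn
        simp only [mem_filter, mem_range, mem_Icc] at hn ⊢
        omega
    _ ≤ B * (2 / log 2 + 2) * (x / log x) := by
        rw [← mul_sum, mul_assoc]
        exact mul_le_mul_of_nonneg_left (sum_Icc_inv_log_le hx hN) hB

end Chebyshev

theorem stmt5 (f : Set ℕ) (d : ℝ) (hd : 0 < d) (C₀ : ℝ) (hC₀ : 0 < C₀)
    (hpi : ∀ x : ℝ, 2 ≤ x →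
      |(primeCountIn f x : ℝ) - d * x / Real.log x| ≤ C₀ * x / (Real.log x) ^ 2) :
    ∃ C : ℝ, 0 < C ∧ ∀ x : ℝ, 2 ≤ x →
      |primeSumIn f Real.log x - d * x| ≤ C * x / Real.log x := by
  set B := d + C₀ / log 2
  have hB : 0 ≤ B := add_nonneg hd.le (div_nonneg hC₀.le (log_pos one_lt_two).le)
  refine ⟨C₀ + 1 + B * (2 / log 2 + 2),
    add_pos_of_pos_of_nonneg (by linarith) (mul_nonneg hB (by positivity)), fun x hx => ?_⟩
  have hmain := abs_mul_sub_le_of_abs_sub_div_le (log_pos (by linarith)) (hpi x hx)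
  have hfloor := primeCountIn_mul_log_sub_log_floor_le f (by linarith : 1 ≤ x)
  have hfloor0 := primeCountIn_mul_log_sub_log_floor_nonneg f (by linarith : 1 ≤ x)
  have hsum := sum_primeCountIn_mul_log_succ_sub_log_le hB
    (fun t ht => primeCountIn_le_of_abs_sub_le hC₀.le hpi ht) hx (Nat.floor_le (by linarith))
  have hsum0 := sum_primeCountIn_mul_log_succ_sub_log_nonneg f ⌊x⌋₊
  have hxL := one_le_div_log (by linarith : 1 < x)
  have hexpand : (C₀ + 1 + B * (2 / log 2 + 2)) * x / log x
      = C₀ * x / log x + x / log x + B * (2 / log 2 + 2) * (x / log x) := by ring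
  rw [primeSumIn_log_eq f (by linarith), abs_le]
  constructor <;> linarith [abs_le.1 hmain]
end

section
/- Let a, b : ℕ → ℝ be sequences of nonnegative reals, and for a real t ≥ 1 set A(t) = ∑_{m ≤ ⌊t⌋} a_m and B(t) = ∑_{m ≤ ⌊t⌋} b_m. Let g : ℝ → ℝ be continuously differentiable with g'(t) ≥ 0 on [1, ∞). Suppose B(n) > 0 for all sufficiently large n, A(n)/B(n) → 1 as n → ∞, and ∫_1^n B(t)·g'(t) dt → ∞ as n → ∞. Then ∫_1^n A(t)·g'(t) dt / ∫_1^n B(t)·g'(t) dt → 1 as n → ∞. -/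
/-!
The integral analogue of Stolz–Cesàro: if `f = o(h)` with `h ≥ 0` and `∫ h` diverges, then the
contribution of any bounded initial interval to `∫ f` is negligible, while on the tail `‖f‖ ≤ ε h`,
so `∫ f = o(∫ h)`. Applied to `f = A g'` and `h = B g'`, which are asymptotically equivalent because
`A ~ B` (the ratio `A/B` only sees the integer part of `t`), it gives `∫ A g' ~ ∫ B g'`.
-/

open Filter

/-- The partial-sum step function `A(t) = ∑_{m ≤ ⌊t⌋} a m`. -/
noncomputable def partialSum (a : ℕ → ℝ) (t : ℝ) : ℝ :=
  ∑ m ∈ Finset.range (⌊t⌋₊ + 1), a m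

open Asymptotics MeasureTheory intervalIntegral

namespace Asymptotics

variable {ι : Type*} {l : Filter ι} {u : ι → ℝ} {a : ℝ} {h : ℝ → ℝ}

theorem IsLittleO.intervalIntegral {E : Type*} [NormedAddCommGroup E] [NormedSpace ℝ E]
    {f : ℝ → E} (hfh : f =o[atTop] h) (hh : ∀ x ≥ a, 0 ≤ h x)
    (hfi : ∀ x ≥ a, IntervalIntegrable f volume a x)
    (hhi : ∀ x ≥ a, IntervalIntegrable h volume a x)
    (hu : Tendsto u l atTop) (hH : Tendsto (fun i => ∫ t in a..u i, h t) l atTop) :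
    (fun i => ∫ t in a..u i, f t) =o[l] fun i => ∫ t in a..u i, h t := by
  refine isLittleO_iff.2 fun ε hε => ?_
  obtain ⟨N, hN⟩ := eventually_atTop.1
    ((isLittleO_iff.1 hfh (half_pos hε)).and (eventually_ge_atTop a))
  set M := max N a
  have hMa : a ≤ M := le_max_right N a
  have hM : ∀ t ≥ M, ‖f t‖ ≤ ε / 2 * h t := fun t ht => by
    obtain ⟨hft, hat⟩ := hN t (le_of_max_le_left ht)
    rwa [Real.norm_of_nonneg (hh t hat)] at hft
  have hhead : (fun _ => ∫ t in a..M, f t) =o[l] fun i => ∫ t in a..u i, h t :=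
    isLittleO_const_left.2 (Or.inr (tendsto_norm_atTop_atTop.comp hH))
  filter_upwards [isLittleO_iff.1 hhead (half_pos hε), hu.eventually_ge_atTop M,
    hH.eventually_ge_atTop 0] with i hhead_i hMu hHpos
  have hau : a ≤ u i := hMa.trans hMu
  have hsub : Set.uIcc M (u i) ⊆ Set.uIcc a (u i) :=
    Set.uIcc_subset_uIcc (Set.mem_uIcc_of_le hMa hMu) Set.right_mem_uIcc
  have hfM := (hfi (u i) hau).mono_set hsub
  have hhM := (hhi (u i) hau).mono_set hsub
  have htail : ‖∫ t in M..u i, f t‖ ≤ ε / 2 * ∫ t in a..u i, h t := calc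
    ‖∫ t in M..u i, f t‖ ≤ ∫ t in M..u i, ε / 2 * h t :=
      norm_integral_le_of_norm_le hMu (ae_of_all _ fun t ht => hM t ht.1.le)
        (hhM.const_mul _)
    _ = ε / 2 * ∫ t in M..u i, h t := integral_const_mul _ _
    _ ≤ ε / 2 * ∫ t in a..u i, h t := by
      gcongr
      rw [← integral_add_adjacent_intervals (hhi M hMa) hhM, le_add_iff_nonneg_left]
      exact integral_nonneg hMa fun t ht => hh t ht.1
  rw [Real.norm_of_nonneg hHpos] at hhead_i ⊢
  calc ‖∫ t in a..u i, f t‖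
      = ‖(∫ t in a..M, f t) + ∫ t in M..u i, f t‖ := by
        rw [integral_add_adjacent_intervals (hfi M hMa) hfM]
    _ ≤ ‖∫ t in a..M, f t‖ + ‖∫ t in M..u i, f t‖ := norm_add_le _ _
    _ ≤ ε / 2 * (∫ t in a..u i, h t) + ε / 2 * ∫ t in a..u i, h t := add_le_add hhead_i htail
    _ = ε * ∫ t in a..u i, h t := by ring

theorem IsEquivalent.intervalIntegral {f : ℝ → ℝ} (hfh : f ~[atTop] h) (hh : ∀ x ≥ a, 0 ≤ h x)
    (hfi : ∀ x ≥ a, IntervalIntegrable f volume a x)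
    (hhi : ∀ x ≥ a, IntervalIntegrable h volume a x)
    (hu : Tendsto u l atTop) (hH : Tendsto (fun i => ∫ t in a..u i, h t) l atTop) :
    (fun i => ∫ t in a..u i, f t) ~[l] fun i => ∫ t in a..u i, h t := by
  refine IsLittleO.isEquivalent ((hfh.isLittleO.intervalIntegral hh
    (fun x hx => (hfi x hx).sub (hhi x hx)) hhi hu hH).congr' ?_ EventuallyEq.rfl)
  filter_upwards [hu.eventually_ge_atTop a] with i hau
  exact integral_sub (hfi _ hau) (hhi _ hau)

end Asymptotics

section partialSum

variable {a b : ℕ → ℝ}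

lemma partialSum_natCast_floor (t : ℝ) : partialSum a ⌊t⌋₊ = partialSum a t := by
  simp only [partialSum, Nat.floor_natCast]

lemma partialSum_nonneg (ha : ∀ m, 0 ≤ a m) (t : ℝ) : 0 ≤ partialSum a t :=
  Finset.sum_nonneg fun m _ => ha m

lemma partialSum_mono (ha : ∀ m, 0 ≤ a m) : Monotone (partialSum a) := fun _ _ hst =>
  Finset.sum_le_sum_of_subset_of_nonneg
    (Finset.range_subset_range.2 (Nat.succ_le_succ (Nat.floor_mono hst))) fun m _ _ => ha m

lemma intervalIntegrable_partialSum_mul (ha : ∀ m, 0 ≤ a m) {g : ℝ → ℝ}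
    (hg : ContinuousOn g (Set.Ici 1)) {x : ℝ} (hx : 1 ≤ x) :
    IntervalIntegrable (fun t => partialSum a t * g t) volume 1 x :=
  (partialSum_mono ha).intervalIntegrable.mul_continuousOn
    (hg.mono fun _ ht => (le_min le_rfl hx).trans ht.1)

lemma partialSum_isEquivalent
    (hratio : Tendsto (fun n : ℕ => partialSum a n / partialSum b n) atTop (nhds 1)) :
    partialSum a ~[atTop] partialSum b :=
  isEquivalent_of_tendsto_one <| (hratio.comp tendsto_nat_floor_atTop).congr fun t => by
    simp only [Function.comp_apply, partialSum_natCast_floor, Pi.div_apply]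

end partialSum

theorem stmt14_general (a b : ℕ → ℝ) (ha : ∀ m, 0 ≤ a m) (hb : ∀ m, 0 ≤ b m)
    (g' : ℝ → ℝ)
    (hcont : ContinuousOn g' (Set.Ici (1 : ℝ)))
    (hg' : ∀ t ∈ Set.Ici (1 : ℝ), 0 ≤ g' t)
    (hratio : Tendsto (fun n : ℕ => partialSum a n / partialSum b n)
      atTop (nhds 1))
    (hint : Tendsto (fun n : ℕ => ∫ t in (1 : ℝ)..(n : ℝ), partialSum b t * g' t)
      atTop atTop) :
    Tendsto (fun n : ℕ =>
        (∫ t in (1 : ℝ)..(n : ℝ), partialSum a t * g' t) /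
          ∫ t in (1 : ℝ)..(n : ℝ), partialSum b t * g' t)
      atTop (nhds 1) := by
  have hequiv : (fun t => partialSum a t * g' t) ~[atTop] fun t => partialSum b t * g' t :=
    (partialSum_isEquivalent hratio).mul IsEquivalent.refl
  have hintegrals := hequiv.intervalIntegral
    (fun t ht => mul_nonneg (partialSum_nonneg hb t) (hg' t ht))
    (fun _ => intervalIntegrable_partialSum_mul ha hcont)
    (fun _ => intervalIntegrable_partialSum_mul hb hcont) tendsto_natCast_atTop_atTop hint
  exact (isEquivalent_iff_tendsto_one
    ((hint.eventually_gt_atTop 0).mono fun _ hpos => hpos.ne')).1 hintegrals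

theorem stmt14 (a b : ℕ → ℝ) (ha : ∀ m, 0 ≤ a m) (hb : ∀ m, 0 ≤ b m)
    (g g' : ℝ → ℝ)
    (hderiv : ∀ t ∈ Set.Ici (1 : ℝ), HasDerivAt g (g' t) t)
    (hcont : ContinuousOn g' (Set.Ici (1 : ℝ)))
    (hg' : ∀ t ∈ Set.Ici (1 : ℝ), 0 ≤ g' t)
    (hBpos : ∀ᶠ n : ℕ in atTop, 0 < partialSum b n)
    (hratio : Tendsto (fun n : ℕ => partialSum a n / partialSum b n)
      atTop (nhds 1))
    (hint : Tendsto (fun n : ℕ => ∫ t in (1 : ℝ)..(n : ℝ), partialSum b t * g' t)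
      atTop atTop) :
    Tendsto (fun n : ℕ =>
        (∫ t in (1 : ℝ)..(n : ℝ), partialSum a t * g' t) /
          ∫ t in (1 : ℝ)..(n : ℝ), partialSum b t * g' t)
      atTop (nhds 1) :=
  stmt14_general a b ha hb g' hcont hg' hratio hint
end

section
/- For a real t ≥ 2 let B(t) = ∑_{2 ≤ m ≤ ⌊t⌋} 1/ln m. Let g : ℝ → ℝ be continuously differentiable with g'(t) ≥ 0 on [2, ∞), and suppose ∫_2^n (t/ln t)·g'(t) dt → ∞ as n → ∞. Then (∫_2^n B(t)·g'(t) dt)/(∫_2^n (t/ln t)·g'(t) dt) → 1 as n → ∞. -/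
/-
`B(t)` lies between `(t - 2) / log t` and `t ^ r / log 2 + t / (r log t)` for any `0 < r < 1`
(split the sum at `m = t ^ r`), so `B(t) ~ t / log t`. Integrating an asymptotic equivalence
against a nonnegative weight preserves it once the comparison integral diverges: the part of
the integral below a fixed cutoff is a bounded error.
-/

open Filter

/-- `B(t) = ∑_{2 ≤ m ≤ ⌊t⌋} 1 / ln m`. -/
noncomputable def invLogPartialSum (t : ℝ) : ℝ :=
  ∑ m ∈ Finset.Icc 2 ⌊t⌋₊, 1 / Real.log m

open Asymptotics MeasureTheory Real

namespace Asymptotics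

variable {ι E : Type*} [NormedAddCommGroup E] [NormedSpace ℝ E] {l : Filter ι} {u : ι → ℝ}
  {a : ℝ}

theorem IsLittleO.intervalIntegral_of_tendsto_atTop {f : ℝ → E} {g : ℝ → ℝ}
    (hfg : f =o[atTop] g) (hg : 0 ≤ᶠ[atTop] g)
    (hf : ∀ b ≥ a, IntervalIntegrable f volume a b)
    (hgi : ∀ b ≥ a, IntervalIntegrable g volume a b)
    (hu : Tendsto u l atTop) (hG : Tendsto (fun i => ∫ t in a..u i, g t) l atTop) :
    (fun i => ∫ t in a..u i, f t) =o[l] fun i => ∫ t in a..u i, g t := by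
  refine IsLittleO.of_bound fun ε hε => ?_
  obtain ⟨T₀, hT₀⟩ := eventually_atTop.1 ((hfg.def (half_pos hε)).and hg)
  set T := max T₀ a
  set C := ‖∫ t in a..T, f t‖ + ε / 2 * |∫ t in a..T, g t| with hC
  filter_upwards [hu.eventually_ge_atTop T, hG.eventually_ge_atTop (2 * C / ε),
    hG.eventually_ge_atTop 0] with i hTi hCi hG0
  have haT : a ≤ T := le_max_right _ _
  have hTail : ‖∫ t in T..u i, f t‖ ≤ ε / 2 * ∫ t in T..u i, g t := by
    rw [← intervalIntegral.integral_const_mul]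
    refine intervalIntegral.norm_integral_le_of_norm_le hTi (ae_of_all _ fun t ht => ?_)
      (((hgi T haT).symm.trans (hgi _ (haT.trans hTi))).const_mul _)
    obtain ⟨hfgt, hgt⟩ := hT₀ t ((le_max_left _ _).trans ht.1.le)
    simpa [Real.norm_of_nonneg hgt] using hfgt
  rw [← intervalIntegral.integral_interval_sub_left (hf _ (haT.trans hTi)) (hf T haT),
    ← intervalIntegral.integral_interval_sub_left (hgi _ (haT.trans hTi)) (hgi T haT)] at hTail
  have hCε : C ≤ ε / 2 * ∫ t in a..u i, g t := by
    linarith [(div_le_iff₀ hε).1 hCi]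
  rw [Real.norm_of_nonneg hG0]
  calc ‖∫ t in a..u i, f t‖
      ≤ ‖∫ t in a..T, f t‖ + ‖(∫ t in a..u i, f t) - ∫ t in a..T, f t‖ :=
        norm_le_insert' _ _
    _ ≤ ε * ∫ t in a..u i, g t := by
      linarith [mul_le_mul_of_nonneg_left (neg_le_abs (∫ t in a..T, g t)) (half_pos hε).le]

theorem IsEquivalent.tendsto_intervalIntegral_div {f g : ℝ → ℝ}
    (hfg : f ~[atTop] g) (hg : 0 ≤ᶠ[atTop] g)
    (hf : ∀ b ≥ a, IntervalIntegrable f volume a b)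
    (hgi : ∀ b ≥ a, IntervalIntegrable g volume a b)
    (hu : Tendsto u l atTop) (hG : Tendsto (fun i => ∫ t in a..u i, g t) l atTop) :
    Tendsto (fun i => (∫ t in a..u i, f t) / ∫ t in a..u i, g t) l (nhds 1) := by
  have hdiff := hfg.isLittleO.intervalIntegral_of_tendsto_atTop hg
    (fun b hb => (hf b hb).sub (hgi b hb)) hgi hu hG
  have hequiv : (fun i => ∫ t in a..u i, f t) ~[l] fun i => ∫ t in a..u i, g t := by
    refine hdiff.congr' ?_ EventuallyEq.rfl
    filter_upwards [hu.eventually_ge_atTop a] with i hi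
    exact intervalIntegral.integral_sub (hf _ hi) (hgi _ hi)
  exact (isEquivalent_iff_tendsto_one (hG.eventually_ne_atTop 0)).1 hequiv

end Asymptotics

theorem invLogPartialSum_mono : Monotone invLogPartialSum := fun _ _ hst =>
  Finset.sum_le_sum_of_subset_of_nonneg (Finset.Icc_subset_Icc_right (Nat.floor_mono hst))
    fun m hm _ => one_div_nonneg.2 <| log_nonneg <| by
      exact_mod_cast (Finset.mem_Icc.1 hm).1.trans' one_le_two

theorem sub_two_div_log_le_invLogPartialSum {t : ℝ} (ht : 1 < t) :
    (t - 2) / log t ≤ invLogPartialSum t := by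
  have hlog : 0 < log t := log_pos ht
  have hcard : t - 2 ≤ (Finset.Icc 2 ⌊t⌋₊).card := by
    have h : ⌊t⌋₊ ≤ (Finset.Icc 2 ⌊t⌋₊).card + 1 := by rw [Nat.card_Icc]; omega
    have h' : (⌊t⌋₊ : ℝ) ≤ (Finset.Icc 2 ⌊t⌋₊).card + 1 := by exact_mod_cast h
    linarith [Nat.sub_one_lt_floor t]
  calc (t - 2) / log t ≤ (Finset.Icc 2 ⌊t⌋₊).card • (1 / log t) := by
        rw [nsmul_eq_mul, ← div_eq_mul_one_div]; gcongr
    _ ≤ invLogPartialSum t := by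
        refine Finset.card_nsmul_le_sum _ _ _ fun m hm => ?_
        obtain ⟨h2m, hmt⟩ := Finset.mem_Icc.1 hm
        have h1m : (1 : ℝ) < m := by exact_mod_cast h2m
        gcongr
        · exact log_pos h1m
        · exact (Nat.le_floor_iff (by linarith)).1 hmt

theorem invLogPartialSum_le {s t : ℝ} (hs : 1 < s) (ht : 0 ≤ t) :
    invLogPartialSum t ≤ s / log 2 + t / log s := by
  have hlog : 0 < log s := log_pos hs
  unfold invLogPartialSum
  rw [← Finset.sum_filter_add_sum_filter_not _ (fun m : ℕ => (m : ℝ) ≤ s)]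
  set low := (Finset.Icc 2 ⌊t⌋₊).filter fun m : ℕ => (m : ℝ) ≤ s
  set high := (Finset.Icc 2 ⌊t⌋₊).filter fun m : ℕ => ¬ (m : ℝ) ≤ s
  have hlow : (low.card : ℝ) ≤ s := calc
    (low.card : ℝ) ≤ (Finset.Icc 1 ⌊s⌋₊).card := by
      refine Nat.cast_le.2 (Finset.card_le_card fun m hm => ?_)
      obtain ⟨hm, hms⟩ := Finset.mem_filter.1 hm
      exact Finset.mem_Icc.2 ⟨(Finset.mem_Icc.1 hm).1.trans' one_le_two, Nat.le_floor hms⟩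
    _ ≤ s := by simpa using Nat.floor_le (by linarith : 0 ≤ s)
  have hhigh : (high.card : ℝ) ≤ t := calc
    (high.card : ℝ) ≤ (Finset.Icc 1 ⌊t⌋₊).card :=
      Nat.cast_le.2 ((Finset.card_filter_le _ _).trans
        (Finset.card_le_card (Finset.Icc_subset_Icc_left one_le_two)))
    _ ≤ t := by simpa using Nat.floor_le ht
  gcongr
  · calc _ ≤ low.card • (1 / log 2) := Finset.sum_le_card_nsmul _ _ _ fun m hm => by
          have h2m : (2 : ℝ) ≤ m := by
            exact_mod_cast (Finset.mem_Icc.1 (Finset.mem_filter.1 hm).1).1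
          gcongr
      _ ≤ s / log 2 := by rw [nsmul_eq_mul, ← div_eq_mul_one_div]; gcongr
  · calc _ ≤ high.card • (1 / log s) := Finset.sum_le_card_nsmul _ _ _ fun m hm => by
          have hsm : s < m := not_le.1 (Finset.mem_filter.1 hm).2
          gcongr
      _ ≤ t / log s := by rw [nsmul_eq_mul, ← div_eq_mul_one_div]; gcongr

theorem isLittleO_rpow_div_log {r : ℝ} (hr : r < 1) :
    (fun t : ℝ => t ^ r) =o[atTop] fun t => t / log t := by
  have h := (isLittleO_log_rpow_atTop (sub_pos.2 hr)).mul_isBigO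
    (isBigO_refl (fun t : ℝ => t ^ r / log t) atTop)
  refine h.congr' ?_ ?_
  · filter_upwards [eventually_gt_atTop 1] with t ht
    field_simp [(log_pos ht).ne']
  · filter_upwards [eventually_gt_atTop 0] with t ht
    rw [← mul_div_assoc, ← rpow_add ht, sub_add_cancel, rpow_one]

theorem invLogPartialSum_isEquivalent :
    invLogPartialSum ~[atTop] fun t => t / log t := by
  refine IsLittleO.of_bound fun ε hε => ?_
  -- split the sum at `t ^ r`, where `1 / r = 1 + ε / 2`
  set r := 2 / (2 + ε) with hr
  have hr0 : 0 < r := by positivity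
  have hr1 : r < 1 := by rw [div_lt_one (by positivity)]; linarith
  filter_upwards [eventually_gt_atTop 1, (tendsto_id.const_mul_atTop hε).eventually_ge_atTop 2,
    (isLittleO_rpow_div_log hr1).def (by positivity : 0 < ε / 2 * log 2)]
    with t ht (htε : 2 ≤ ε * t) hsmall
  have hlog : 0 < log t := log_pos ht
  have hφ : 0 ≤ t / log t := by positivity
  rw [Pi.sub_apply, Real.norm_eq_abs, Real.norm_of_nonneg hφ, abs_le]
  rw [Real.norm_of_nonneg (by positivity), Real.norm_of_nonneg hφ] at hsmall
  constructor
  · have hlow := sub_two_div_log_le_invLogPartialSum ht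
    have : (t - ε * t) / log t ≤ (t - 2) / log t := by gcongr
    linarith [show (t - ε * t) / log t = t / log t - ε * (t / log t) by ring]
  · have hup := invLogPartialSum_le (one_lt_rpow ht hr0) (by linarith : 0 ≤ t)
    rw [log_rpow (by linarith)] at hup
    have h1 : t ^ r / log 2 ≤ ε / 2 * (t / log t) := by
      rw [div_le_iff₀ (log_pos one_lt_two)]; linarith
    have h2 : t / (r * log t) = (1 + ε / 2) * (t / log t) := by
      rw [hr]; field_simp
    linarith

theorem stmt16_general (g' : ℝ → ℝ)
    (hcont : ContinuousOn g' (Set.Ici (2 : ℝ)))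
    (hg' : ∀ t ∈ Set.Ici (2 : ℝ), 0 ≤ g' t)
    (hint : Tendsto (fun n : ℕ => ∫ t in (2 : ℝ)..(n : ℝ), t / Real.log t * g' t)
      atTop atTop) :
    Tendsto (fun n : ℕ =>
        (∫ t in (2 : ℝ)..(n : ℝ), invLogPartialSum t * g' t) /
          ∫ t in (2 : ℝ)..(n : ℝ), t / Real.log t * g' t)
      atTop (nhds 1) := by
  have huIcc : ∀ b ≥ (2 : ℝ), Set.uIcc 2 b ⊆ Set.Ici 2 := fun b hb => by
    rw [Set.uIcc_of_le hb]; exact Set.Icc_subset_Ici_self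
  have hφ : ContinuousOn (fun t => t / log t) (Set.Ici 2) :=
    continuousOn_id.div
      (continuousOn_log.mono fun t ht => (by linarith [ht.out] : (0 : ℝ) < t).ne')
      fun t ht => (log_pos (by linarith [ht.out])).ne'
  refine (invLogPartialSum_isEquivalent.mul (IsEquivalent.refl (u := g'))
    ).tendsto_intervalIntegral_div ?_ (fun b hb => ?_) (fun b hb => ?_)
    tendsto_natCast_atTop_atTop hint
  · filter_upwards [eventually_ge_atTop 2] with t ht
    exact mul_nonneg (div_nonneg (by linarith) (log_nonneg (by linarith))) (hg' t ht)
  · exact (invLogPartialSum_mono.monotoneOn _).intervalIntegrable.mul_continuousOn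
      (hcont.mono (huIcc b hb))
  · exact ((hφ.mul hcont).mono (huIcc b hb)).intervalIntegrable

theorem stmt16 (g g' : ℝ → ℝ)
    (hderiv : ∀ t ∈ Set.Ici (2 : ℝ), HasDerivAt g (g' t) t)
    (hcont : ContinuousOn g' (Set.Ici (2 : ℝ)))
    (hg' : ∀ t ∈ Set.Ici (2 : ℝ), 0 ≤ g' t)
    (hint : Tendsto (fun n : ℕ => ∫ t in (2 : ℝ)..(n : ℝ), t / Real.log t * g' t)
      atTop atTop) :
    Tendsto (fun n : ℕ =>
        (∫ t in (2 : ℝ)..(n : ℝ), invLogPartialSum t * g' t) /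
          ∫ t in (2 : ℝ)..(n : ℝ), t / Real.log t * g' t)
      atTop (nhds 1) :=
  stmt16_general g' hcont hg' hint
end

section
/- Let f be a set of natural numbers containing infinitely many primes, let g : ℕ → ℝ, let a : ℕ → ℝ be a sequence with a_p = 1 for every prime p ∈ f, and let b : ℕ → ℝ be a sequence with b_n → 0 as n → ∞. For n ≥ 1 set S_a(n) = ∑_{m=1}^n a_m·g(m) and S_b(n) = ∑_{m=1}^n b_m·g(m), and suppose S_b(n) ≠ 0 for all sufficiently large n and S_a(n)/S_b(n) → 1 as n → ∞. Then |g(p)| / |S_b(p)| → 0 as p → ∞ through primes p ∈ f; that is, for every ε > 0 there exists N such that every prime p ∈ f with p ≥ N satisfies |g(p)|/|S_b(p)| < ε. -/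
/-!
Write `A n`, `B n` for the two partial sums and `r n = A n / B n`. At a prime `p ∈ f` the sum
`A` grows by exactly `g p` and `B` by `b p * g p`, which gives
`g p / B p = (r p - r (p - 1)) / (1 - r (p - 1) * b p)`.
Since `r → 1` and `b → 0`, the numerator tends to `0` and the denominator to `1`.
-/

open Filter Topology

lemma div_eq_ratio_sub_ratio_div {A A' B B' x β : ℝ} (hB : B ≠ 0) (hB' : B' ≠ 0)
    (hden : 1 - A' / B' * β ≠ 0) (hA : A = A' + x) (hBx : B = B' + β * x) :
    x / B = (A / B - A' / B') / (1 - A' / B' * β) := by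
  rw [eq_div_iff hden]
  subst hA
  field_simp
  linear_combination A' * hBx

lemma eventually_abs_increment_div_lt {A B x β : ℕ → ℝ}
    (hratio : Tendsto (fun n => A n / B n) atTop (𝓝 1)) (hβ : Tendsto β atTop (𝓝 0))
    (hB : ∀ᶠ n in atTop, B n ≠ 0) {ε : ℝ} (hε : 0 < ε) :
    ∀ᶠ n in atTop, A n = A (n - 1) + x n → B n = B (n - 1) + β n * x n → |x n / B n| < ε := by
  have hratio_pred := hratio.comp (tendsto_sub_atTop_nat 1)
  have hden : Tendsto (fun n => 1 - A (n - 1) / B (n - 1) * β n) atTop (𝓝 1) := by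
    simpa using tendsto_const_nhds.sub (hratio_pred.mul hβ)
  have hquot : Tendsto (fun n => (A n / B n - A (n - 1) / B (n - 1)) /
      (1 - A (n - 1) / B (n - 1) * β n)) atTop (𝓝 0) := by
    have h := (hratio.sub hratio_pred).div hden one_ne_zero
    rwa [sub_self, zero_div] at h
  filter_upwards [hB, (tendsto_sub_atTop_nat 1).eventually hB, hden.eventually_ne one_ne_zero,
    Metric.tendsto_nhds.mp hquot ε hε] with n hBn hBn' hden_ne hsmall hA hBx
  rwa [div_eq_ratio_sub_ratio_div hBn hBn' hden_ne hA hBx, ← Real.dist_0_eq_abs]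

lemma sum_Icc_one_eq_sum_Icc_one_sub_one_add {M : Type*} [AddCommMonoid M] (u : ℕ → M)
    {n : ℕ} (hn : 1 ≤ n) :
    ∑ m ∈ Finset.Icc 1 n, u m = ∑ m ∈ Finset.Icc 1 (n - 1), u m + u n := by
  obtain ⟨k, rfl⟩ := Nat.exists_eq_add_of_le' hn
  simpa using Finset.sum_Icc_succ_top (by omega : 1 ≤ k + 1) u

theorem stmt19_general (f : Set ℕ)
    (g a b : ℕ → ℝ)
    (ha : ∀ p : ℕ, p.Prime → p ∈ f → a p = 1)
    (hb : Tendsto b atTop (nhds 0))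
    (hSb : ∀ᶠ n : ℕ in atTop, (∑ m ∈ Finset.Icc 1 n, b m * g m) ≠ 0)
    (hratio : Tendsto (fun n : ℕ =>
        (∑ m ∈ Finset.Icc 1 n, a m * g m) / ∑ m ∈ Finset.Icc 1 n, b m * g m)
      atTop (nhds 1)) :
    ∀ ε : ℝ, 0 < ε → ∃ N : ℕ, ∀ p : ℕ, p.Prime → p ∈ f → N ≤ p →
      |g p| / |∑ m ∈ Finset.Icc 1 p, b m * g m| < ε := by
  intro ε hε
  obtain ⟨N, hN⟩ := eventually_atTop.mp <| (eventually_ge_atTop 1).and <|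
    eventually_abs_increment_div_lt (x := g) hratio hb hSb hε
  refine ⟨N, fun p hp hpf hNp => ?_⟩
  obtain ⟨hp1, hsmall⟩ := hN p hNp
  rw [← abs_div]
  refine hsmall ?_ (sum_Icc_one_eq_sum_Icc_one_sub_one_add _ hp1)
  rw [sum_Icc_one_eq_sum_Icc_one_sub_one_add _ hp1, ha p hp hpf, one_mul]

theorem stmt19 (f : Set ℕ) (hf : {p : ℕ | p.Prime ∧ p ∈ f}.Infinite)
    (g a b : ℕ → ℝ)
    (ha : ∀ p : ℕ, p.Prime → p ∈ f → a p = 1)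
    (hb : Tendsto b atTop (nhds 0))
    (hSb : ∀ᶠ n : ℕ in atTop, (∑ m ∈ Finset.Icc 1 n, b m * g m) ≠ 0)
    (hratio : Tendsto (fun n : ℕ =>
        (∑ m ∈ Finset.Icc 1 n, a m * g m) / ∑ m ∈ Finset.Icc 1 n, b m * g m)
      atTop (nhds 1)) :
    ∀ ε : ℝ, 0 < ε → ∃ N : ℕ, ∀ p : ℕ, p.Prime → p ∈ f → N ≤ p →
      |g p| / |∑ m ∈ Finset.Icc 1 p, b m * g m| < ε :=
  stmt19_general f g a b ha hb hSb hratio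
end
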